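/- There exists a network with 5 neurons satisfying the standing assumptions and Dale's Principle, together with a synaptically equivalent network with 6 neurons. Consequently, a network can satisfy Dale's Principle without having the maximum number of neurons within its synaptical equivalence class: Dale's Principle is not sufficient for dynamical optimality. (Main Theorem: counterexample.) -/

import Mathlib

/-
The 5-neuron network is the excitatory cycle 0 → 1 → 2 → 3 → 0 together with a neuron 4
exciting both 0 and 1; all labels are distinct, so every homogeneous part and every synaptical
unit is a single neuron. Splitting neuron 4 into two copies 4 and 5 with its label, one exciting 0
and the other exciting 1, gives two structurally identical neurons whose targets are disjoint. So
{4, 5} is a homogeneous part which is itself a unit-candidate, hence a synaptical unit, and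
collapsing it back onto neuron 4 identifies the units, homogeneous parts, inter-unit weights and
labels of the two networks.
-/

namespace NeuralNet

open Classical

/-- Neurons `i` and `j` are *structurally identical*: `i = j`, or else the intrinsic
dynamics labels coincide, the mutual synaptic actions vanish, and every other neuron
acts equally on both. -/
def StructId {α : Type*} {N : ℕ} (F : Fin N → α) (Δ : Fin N → Fin N → ℝ)
    (i j : Fin N) : Prop :=
  i = j ∨ (F i = F j ∧ Δ i j = 0 ∧ Δ j i = 0 ∧ ∀ h, h ≠ i → h ≠ j → Δ h i = Δ h j)

/-- A *homogeneous part* is an equivalence class of the structural-identity relation. -/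
def IsHomPart {α : Type*} {N : ℕ} (F : Fin N → α) (Δ : Fin N → Fin N → ℝ)
    (A : Set (Fin N)) : Prop :=
  ∃ i, A = {j | StructId F Δ i j}

/-- A subset `U` of a homogeneous part `A` is a *unit-candidate* if for every neuron
`h ∉ A` there is at most one `i ∈ U` with `Δ i h ≠ 0`. -/
def UnitCandidate {N : ℕ} (Δ : Fin N → Fin N → ℝ) (A U : Set (Fin N)) : Prop :=
  U ⊆ A ∧ ∀ h ∉ A, ∀ i ∈ U, ∀ j ∈ U, Δ i h ≠ 0 → Δ j h ≠ 0 → i = j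

/-- A partition of the homogeneous part `A` into nonempty unit-candidates. -/
def IsUnitPartition {N : ℕ} (Δ : Fin N → Fin N → ℝ) (A : Set (Fin N))
    (P : Set (Set (Fin N))) : Prop :=
  (∀ U ∈ P, U.Nonempty ∧ UnitCandidate Δ A U) ∧ P.PairwiseDisjoint id ∧ ⋃₀ P = A

/-- A *synaptical unit* is a member of a partition of some homogeneous part `A` into
nonempty unit-candidates whose number of parts is minimal. -/
def IsSynapticalUnit {α : Type*} {N : ℕ} (F : Fin N → α) (Δ : Fin N → Fin N → ℝ)
    (U : Set (Fin N)) : Prop :=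
  ∃ A P, IsHomPart F Δ A ∧ IsUnitPartition Δ A P ∧
    (∀ Q, IsUnitPartition Δ A Q → P.ncard ≤ Q.ncard) ∧ U ∈ P

/-- `deltaIB Δ i B` : the common value of `Δ i h` over `h ∈ B` (defined by choice of a
representative of `B`; it is well-defined when `B` is a homogeneous part). -/
noncomputable def deltaIB {N : ℕ} (Δ : Fin N → Fin N → ℝ) (i : Fin N)
    (B : Set (Fin N)) : ℝ :=
  if hB : B.Nonempty then Δ i hB.choose else 0

/-- `deltaUB Δ U B` : the inter-unit weight `Δ_{U,B}`; it is `0` if `deltaIB Δ i B = 0`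
for every `i ∈ U`, and otherwise the value `deltaIB Δ i B` for a chosen `i ∈ U` with
nonzero value (unique when `U` is a unit-candidate and `B` a homogeneous part). -/
noncomputable def deltaUB {N : ℕ} (Δ : Fin N → Fin N → ℝ) (U B : Set (Fin N)) : ℝ :=
  if h : ∃ i ∈ U, deltaIB Δ i B ≠ 0 then deltaIB Δ h.choose B else 0

/-- Neuron `i` is *excitatory*. -/
def Excitatory {N : ℕ} (Δ : Fin N → Fin N → ℝ) (i : Fin N) : Prop :=
  (∀ j, 0 ≤ Δ i j) ∧ ∃ j, 0 < Δ i j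

/-- Neuron `i` is *inhibitory*. -/
def Inhibitory {N : ℕ} (Δ : Fin N → Fin N → ℝ) (i : Fin N) : Prop :=
  (∀ j, Δ i j ≤ 0) ∧ ∃ j, Δ i j < 0

/-- Neuron `i` is *mixed*. -/
def Mixed {N : ℕ} (Δ : Fin N → Fin N → ℝ) (i : Fin N) : Prop :=
  (∃ j, 0 < Δ i j) ∧ ∃ j, Δ i j < 0

/-- The image of a homogeneous part `B` under the unit bijection `φ`: the union of the
images of the units of `P` contained in `B`. -/
def partImage {N N' : ℕ} (P : Set (Set (Fin N))) (φ : Set (Fin N) → Set (Fin N'))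
    (B : Set (Fin N)) : Set (Fin N') :=
  {i' | ∃ U ∈ P, U ⊆ B ∧ i' ∈ φ U}

/-- The networks `(F, Δ)` on `Fin N` and `(F', Δ')` on `Fin N'` are *synaptically
equivalent*: there are partitions of each set of neurons into synaptical units and a
bijection `φ` between them preserving homogeneous parts, inter-unit weights, and
intrinsic dynamics labels. -/
def SynEquiv {α : Type*} {N N' : ℕ} (F : Fin N → α) (Δ : Fin N → Fin N → ℝ)
    (F' : Fin N' → α) (Δ' : Fin N' → Fin N' → ℝ) : Prop :=
  ∃ (P : Set (Set (Fin N))) (P' : Set (Set (Fin N')))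
    (φ : Set (Fin N) → Set (Fin N')),
    (∀ U ∈ P, IsSynapticalUnit F Δ U) ∧ P.PairwiseDisjoint id ∧ ⋃₀ P = Set.univ ∧
    (∀ U' ∈ P', IsSynapticalUnit F' Δ' U') ∧ P'.PairwiseDisjoint id ∧
      ⋃₀ P' = Set.univ ∧
    Set.BijOn φ P P' ∧
    (∀ U ∈ P, ∀ V ∈ P,
      ((∃ A, IsHomPart F Δ A ∧ U ⊆ A ∧ V ⊆ A) ↔
        (∃ A', IsHomPart F' Δ' A' ∧ φ U ⊆ A' ∧ φ V ⊆ A'))) ∧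
    (∀ U ∈ P, ∀ B, IsHomPart F Δ B →
      deltaUB Δ U B = deltaUB Δ' (φ U) (partImage P φ B)) ∧
    (∀ U ∈ P, ∀ i ∈ U, ∀ i' ∈ φ U, F i = F' i')

/-- The labels of the *split network* obtained by splitting the mixed neuron `i`. -/
def splitF {α : Type*} {N : ℕ} (F : Fin N → α) (i : Fin N) : Fin (N + 1) → α :=
  fun j => if hj : (j : ℕ) < N then F ⟨j, hj⟩ else F i

/-- The synaptic actions of the *split network* obtained by splitting the mixed neuron
`i`: neuron `i` keeps the positive parts of its actions, the new neuron `N` gets the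
negative parts, and the new neuron receives exactly what `i` receives. -/
def splitΔ {N : ℕ} (Δ : Fin N → Fin N → ℝ) (i : Fin N) :
    Fin (N + 1) → Fin (N + 1) → ℝ := fun j h =>
  if hj : (j : ℕ) < N then
    if hh : (h : ℕ) < N then
      if (⟨j, hj⟩ : Fin N) = i then max (Δ i ⟨h, hh⟩) 0 else Δ ⟨j, hj⟩ ⟨h, hh⟩
    else
      if (⟨j, hj⟩ : Fin N) = i then 0 else Δ ⟨j, hj⟩ i
  else
    if hh : (h : ℕ) < N then
      if (⟨h, hh⟩ : Fin N) = i then 0 else min (Δ i ⟨h, hh⟩) 0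
    else 0

variable {α : Type*} {N N' : ℕ} {F : Fin N → α} {Δ : Fin N → Fin N → ℝ}
  {F' : Fin N' → α} {Δ' : Fin N' → Fin N' → ℝ}

theorem structId_equivalence (F : Fin N → α) (Δ : Fin N → Fin N → ℝ) :
    Equivalence (StructId F Δ) where
  refl _ := Or.inl rfl
  symm := by
    rintro i j (rfl | ⟨hF, hij, hji, h⟩)
    · exact Or.inl rfl
    · exact Or.inr ⟨hF.symm, hji, hij, fun k hj hi => (h k hi hj).symm⟩
  trans := by
    intro i j k hij hjk
    by_cases hij' : i = j
    · exact hij' ▸ hjk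
    by_cases hjk' : j = k
    · exact hjk' ▸ hij
    by_cases hik : i = k
    · exact Or.inl hik
    obtain ⟨hF₁, hij₀, hji₀, h₁⟩ := hij.resolve_left hij'
    obtain ⟨hF₂, hjk₀, hkj₀, h₂⟩ := hjk.resolve_left hjk'
    refine Or.inr ⟨hF₁.trans hF₂, ?_, ?_, fun h hi hk => ?_⟩
    · rw [← h₂ i hij' hik, hij₀]
    · rw [h₁ k (Ne.symm hik) (Ne.symm hjk'), hkj₀]
    · by_cases hj : h = j
      · subst hj; rw [hji₀, hjk₀]
      · rw [h₁ h hi hj, h₂ h hj hk]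

theorem IsHomPart.eq_setOf_of_mem {A : Set (Fin N)} (hA : IsHomPart F Δ A) {i : Fin N}
    (hi : i ∈ A) : A = {j | StructId F Δ i j} := by
  obtain ⟨k, rfl⟩ := hA
  have hki : StructId F Δ k i := hi
  ext j
  exact ⟨(structId_equivalence F Δ).trans ((structId_equivalence F Δ).symm hki),
    (structId_equivalence F Δ).trans hki⟩

theorem IsHomPart.nonempty {A : Set (Fin N)} (hA : IsHomPart F Δ A) : A.Nonempty := by
  obtain ⟨i, rfl⟩ := hA
  exact ⟨i, Or.inl rfl⟩

theorem IsHomPart.eq_of_subset {A B : Set (Fin N)} (hA : IsHomPart F Δ A)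
    (hB : IsHomPart F Δ B) (hAB : A ⊆ B) : A = B := by
  obtain ⟨i, hi⟩ := hA.nonempty
  rw [hA.eq_setOf_of_mem hi, hB.eq_setOf_of_mem (hAB hi)]

theorem exists_isHomPart_superset_iff {U V : Set (Fin N)} (hU : IsHomPart F Δ U)
    (hV : IsHomPart F Δ V) : (∃ A, IsHomPart F Δ A ∧ U ⊆ A ∧ V ⊆ A) ↔ U = V := by
  refine ⟨fun ⟨A, hA, hUA, hVA⟩ => ?_, ?_⟩
  · exact (hU.eq_of_subset hA hUA).trans (hV.eq_of_subset hA hVA).symm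
  · rintro rfl
    exact ⟨U, hU, subset_rfl, subset_rfl⟩

theorem pairwiseDisjoint_isHomPart : {A | IsHomPart F Δ A}.PairwiseDisjoint id := by
  intro A hA B hB hAB
  refine Set.disjoint_left.2 fun i hiA hiB => hAB ?_
  rw [hA.eq_setOf_of_mem hiA, IsHomPart.eq_setOf_of_mem hB hiB]

theorem sUnion_isHomPart : ⋃₀ {A | IsHomPart F Δ A} = Set.univ :=
  Set.eq_univ_of_forall fun i => ⟨_, ⟨i, rfl⟩, Or.inl rfl⟩

/-- `{A}` is a minimal partition of `A`, having a single part. -/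
theorem IsHomPart.isSynapticalUnit {A : Set (Fin N)} (hA : IsHomPart F Δ A)
    (hunit : UnitCandidate Δ A A) : IsSynapticalUnit F Δ A := by
  refine ⟨A, {A}, hA, ⟨?_, Set.pairwiseDisjoint_singleton _ _, Set.sUnion_singleton _⟩,
    fun Q hQ => ?_, rfl⟩
  · rintro U rfl
    exact ⟨hA.nonempty, hunit⟩
  · obtain ⟨i, hi⟩ := hA.nonempty
    rw [← hQ.2.2] at hi
    obtain ⟨U, hU, -⟩ := hi
    rw [Set.ncard_singleton]
    exact (Set.ncard_pos).2 ⟨U, hU⟩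

theorem deltaIB_eq {i b : Fin N} {B : Set (Fin N)} (hb : b ∈ B)
    (hconst : ∀ x ∈ B, Δ i x = Δ i b) : deltaIB Δ i B = Δ i b := by
  have hB : B.Nonempty := ⟨b, hb⟩
  rw [deltaIB, dif_pos hB]
  exact hconst _ hB.choose_spec

theorem deltaUB_eq {U B : Set (Fin N)} {b : Fin N} {c : ℝ} (hb : b ∈ B)
    (hconst : ∀ i ∈ U, ∀ x ∈ B, Δ i x = Δ i b) (hval : ∀ i ∈ U, Δ i b = 0 ∨ Δ i b = c)
    (hex : c = 0 ∨ ∃ i ∈ U, Δ i b = c) : deltaUB Δ U B = c := by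
  have hIB : ∀ i ∈ U, deltaIB Δ i B = Δ i b := fun i hi => deltaIB_eq hb (hconst i hi)
  rw [deltaUB]
  split_ifs with h
  · obtain ⟨hi, hne⟩ := h.choose_spec
    rw [hIB _ hi] at hne ⊢
    exact (hval _ hi).resolve_left hne
  · push Not at h
    obtain hc | ⟨i, hi, hic⟩ := hex
    · exact hc.symm
    · rw [← hic, ← hIB i hi, h i hi]

theorem deltaUB_singleton_singleton (k m : Fin N) : deltaUB Δ {k} {m} = Δ k m := by
  refine deltaUB_eq rfl ?_ ?_ (Or.inr ⟨k, rfl, rfl⟩)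
  · rintro i rfl x rfl; rfl
  · rintro i rfl; exact Or.inr rfl

theorem synEquiv_of_bijOn_isHomPart (φ : Set (Fin N) → Set (Fin N'))
    (hφ : Set.BijOn φ {A | IsHomPart F Δ A} {A' | IsHomPart F' Δ' A'})
    (hunit : ∀ A, IsHomPart F Δ A → UnitCandidate Δ A A)
    (hunit' : ∀ A', IsHomPart F' Δ' A' → UnitCandidate Δ' A' A')
    (hΔ : ∀ A B, IsHomPart F Δ A → IsHomPart F Δ B → deltaUB Δ A B = deltaUB Δ' (φ A) (φ B))
    (hF : ∀ A, IsHomPart F Δ A → ∀ i ∈ A, ∀ i' ∈ φ A, F i = F' i') :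
    SynEquiv F Δ F' Δ' := by
  have hpartImage : ∀ B, IsHomPart F Δ B → partImage {A | IsHomPart F Δ A} φ B = φ B := by
    intro B hB
    ext i'
    exact ⟨fun ⟨U, hU, hUB, hi'⟩ => hU.eq_of_subset hB hUB ▸ hi', fun h => ⟨B, hB, subset_rfl, h⟩⟩
  refine ⟨_, _, φ, fun A hA => hA.isSynapticalUnit (hunit A hA), pairwiseDisjoint_isHomPart,
    sUnion_isHomPart, fun A' hA' => hA'.isSynapticalUnit (hunit' A' hA'),
    pairwiseDisjoint_isHomPart, sUnion_isHomPart, hφ, fun U hU V hV => ?_,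
    fun U hU B hB => ?_, hF⟩
  · rw [exists_isHomPart_superset_iff hU hV,
      exists_isHomPart_superset_iff (hφ.mapsTo hU) (hφ.mapsTo hV)]
    exact hφ.injOn.eq_iff hU hV |>.symm
  · rw [hpartImage B hB]
    exact hΔ U B hU hB

/-- The second network arises from the first by replacing each neuron `k` with the homogeneous
part `π ⁻¹' {k}` of copies of it. -/
theorem synEquiv_of_isHomPart_fiber (π : Fin N' → Fin N) (hπ : Function.Surjective π)
    (hF : Function.Injective F) (hF' : ∀ i', F' i' = F (π i'))
    (hstruct : ∀ i' j', StructId F' Δ' i' j' ↔ π i' = π j')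
    (hunit : ∀ k, UnitCandidate Δ' (π ⁻¹' {k}) (π ⁻¹' {k}))
    (hΔ : ∀ k m, Δ k m = deltaUB Δ' (π ⁻¹' {k}) (π ⁻¹' {m})) :
    SynEquiv F Δ F' Δ' := by
  have hsingleton : ∀ i, {j | StructId F Δ i j} = {i} := fun i =>
    Set.ext fun j => ⟨fun h => h.elim Eq.symm fun h => (hF h.1).symm, fun h => Or.inl h.symm⟩
  have hpart : ∀ A, IsHomPart F Δ A ↔ ∃ k, A = {k} := fun A => by
    simp only [IsHomPart, hsingleton]
  have hfiber : ∀ i', {j' | StructId F' Δ' i' j'} = π ⁻¹' {π i'} := fun i' =>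
    Set.ext fun j' => (hstruct i' j').trans eq_comm
  have hpart' : ∀ A', IsHomPart F' Δ' A' ↔ ∃ k, A' = π ⁻¹' {k} := fun A' => by
    simp only [IsHomPart, hfiber]
    refine ⟨fun ⟨i', h⟩ => ⟨π i', h⟩, fun ⟨k, h⟩ => ?_⟩
    obtain ⟨i', rfl⟩ := hπ k
    exact ⟨i', h⟩
  refine synEquiv_of_bijOn_isHomPart (Set.preimage π) ⟨?_, ?_, ?_⟩ ?_ ?_ ?_ ?_
  · intro A hA
    obtain ⟨k, rfl⟩ := (hpart A).1 hA
    exact (hpart' _).2 ⟨k, rfl⟩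
  · exact (Set.preimage_injective.2 hπ).injOn
  · intro A' hA'
    obtain ⟨k, rfl⟩ := (hpart' A').1 hA'
    exact ⟨{k}, (hpart _).2 ⟨k, rfl⟩, rfl⟩
  · intro A hA
    obtain ⟨k, rfl⟩ := (hpart A).1 hA
    exact ⟨subset_rfl, fun _ _ i hi j hj _ _ => hi.trans hj.symm⟩
  · intro A' hA'
    obtain ⟨k, rfl⟩ := (hpart' A').1 hA'
    exact hunit k
  · intro A B hA hB
    obtain ⟨k, rfl⟩ := (hpart A).1 hA
    obtain ⟨m, rfl⟩ := (hpart B).1 hB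
    rw [deltaUB_singleton_singleton, hΔ]
  · intro A hA i hi i' hi'
    obtain ⟨k, rfl⟩ := (hpart A).1 hA
    obtain rfl : i = k := hi
    obtain rfl : π i' = i := hi'
    exact (hF' i').symm

namespace Counterexample

def weights5 : Fin 5 → Fin 5 → ℤ :=
  ![![0, 1, 0, 0, 0], ![0, 0, 1, 0, 0], ![0, 0, 0, 1, 0], ![1, 0, 0, 0, 0], ![1, 1, 0, 0, 0]]

def weights6 : Fin 6 → Fin 6 → ℤ :=
  ![![0, 1, 0, 0, 0, 0], ![0, 0, 1, 0, 0, 0], ![0, 0, 0, 1, 0, 0], ![1, 0, 0, 0, 0, 0],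
    ![1, 0, 0, 0, 0, 0], ![0, 1, 0, 0, 0, 0]]

noncomputable def Δ5 (i j : Fin 5) : ℝ := weights5 i j

noncomputable def Δ6 (i j : Fin 6) : ℝ := weights6 i j

/-- Also the labelling of the 6-neuron network. -/
def collapse (i : Fin 6) : Fin 5 := ⟨min i 4, by omega⟩

theorem collapse_surjective : Function.Surjective collapse := by decide

theorem structId_Δ6_iff (i' j' : Fin 6) :
    StructId collapse Δ6 i' j' ↔ collapse i' = collapse j' := by
  simp only [StructId, Δ6, Int.cast_eq_zero, Int.cast_inj]
  revert i' j'
  decide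

theorem unitCandidate_collapse_fiber (k : Fin 5) :
    UnitCandidate Δ6 (collapse ⁻¹' {k}) (collapse ⁻¹' {k}) := by
  refine ⟨subset_rfl, ?_⟩
  simp only [Set.mem_preimage, Set.mem_singleton_iff, Δ6, ne_eq, Int.cast_eq_zero]
  revert k
  decide

theorem Δ5_eq_deltaUB_collapse_fiber (k m : Fin 5) :
    Δ5 k m = deltaUB Δ6 (collapse ⁻¹' {k}) (collapse ⁻¹' {m}) := by
  symm
  refine deltaUB_eq (b := m.castSucc) ?_ ?_ ?_ ?_ <;>
    simp only [Set.mem_preimage, Set.mem_singleton_iff, Δ5, Δ6, Int.cast_inj,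
      Int.cast_eq_zero] <;>
    revert k m <;> decide

end Counterexample

open Counterexample in
/-- there is a 5-neuron network satisfying the standing assumptions and
Dale's Principle which is synaptically equivalent to a 6-neuron network; hence Dale's
Principle does not imply having the maximum number of neurons in the class. -/
theorem dale_principle_not_sufficient :
    ∃ (α : Type) (F : Fin 5 → α) (Δ : Fin 5 → Fin 5 → ℝ)
      (F' : Fin 6 → α) (Δ' : Fin 6 → Fin 6 → ℝ),
      (∀ i, Δ i i = 0) ∧ (∀ i, ∃ j, Δ i j ≠ 0) ∧
      (∀ i : Fin 5, ¬ Mixed Δ i) ∧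
      (∀ i, Δ' i i = 0) ∧ (∀ i, ∃ j, Δ' i j ≠ 0) ∧
      SynEquiv F Δ F' Δ' := by
  have hnonneg : ∀ i j, 0 ≤ Δ5 i j := by
    simp only [Δ5, Int.cast_nonneg_iff]
    decide
  refine ⟨Fin 5, id, Δ5, collapse, Δ6, ?_, ?_, fun i ⟨_, j, hj⟩ => (hnonneg i j).not_gt hj,
    ?_, ?_, synEquiv_of_isHomPart_fiber collapse collapse_surjective Function.injective_id
      (fun _ => rfl) structId_Δ6_iff unitCandidate_collapse_fiber Δ5_eq_deltaUB_collapse_fiber⟩ <;>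
    simp only [Δ5, Δ6, ne_eq, Int.cast_eq_zero] <;> decide

end NeuralNet
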